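/- Let A, B, C be an affinely independent triple in the Euclidean plane with incenter I = (a·A + b·B + c·C)/(2s) (where a = dist B C, b = dist C A, c = dist A B, s = (a+b+c)/2) and orthocenter H. Let H_A be the orthocenter of triangle BIC, and let O_a be the circumcenter of triangle H_A B C (assumed affinely independent). Then the vector I − A is orthogonal to the vector O_a − H, i.e., the line AI is perpendicular to the line H O_a. -/

import Mathlib

open EuclideanGeometry
open scoped InnerProductSpace

/-!
With `O` the circumcenter of `ABC` we have `H = A + B + C - 2O`, and likewise
`H_A = B + I + C - 2N` for the circumcenter `N` of `BIC`. Hence the circumcircle of `H_A B C` is the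
reflection of that of `BIC` in the midpoint of `BC`: `O_a = B + C - N`, and
`O_a - H = (O - A) + (O - N)`. By the trillium theorem `N` is the midpoint of the arc `BC`, the
second intersection of the ray `AI` with the circumcircle. So `AN` is a chord of the circumcircle,
perpendicular to `(O - A) + (O - N)`, and it lies along `AI`.
-/

/-- The orthocenter of the triangle with vertices `A`, `B`, `C`. -/
noncomputable def orthocenter3 (A B C : EuclideanSpace ℝ (Fin 2))
    (h : AffineIndependent ℝ ![A, B, C]) : EuclideanSpace ℝ (Fin 2) :=
  Affine.Triangle.orthocenter ⟨![A, B, C], h⟩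

/-- The circumcenter of the triangle with vertices `A`, `B`, `C`. -/
noncomputable def circumcenter3 (A B C : EuclideanSpace ℝ (Fin 2))
    (h : AffineIndependent ℝ ![A, B, C]) : EuclideanSpace ℝ (Fin 2) :=
  Affine.Simplex.circumcenter ⟨![A, B, C], h⟩

/-- The circumradius of the triangle with vertices `A`, `B`, `C`. -/
noncomputable def circumradius3 (A B C : EuclideanSpace ℝ (Fin 2))
    (h : AffineIndependent ℝ ![A, B, C]) : ℝ :=
  Affine.Simplex.circumradius ⟨![A, B, C], h⟩

section InnerProductSpace

variable {V : Type*} [NormedAddCommGroup V] [InnerProductSpace ℝ V]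

theorem norm_smul_sub_add_smul_sub_sq (A B C : V) (α β : ℝ) :
    ‖α • (B - A) + β • (C - A)‖ ^ 2 = α ^ 2 * dist A B ^ 2
      + α * β * (dist C A ^ 2 + dist A B ^ 2 - dist B C ^ 2) + β ^ 2 * dist C A ^ 2 := by
  have hcos : dist B C ^ 2 = dist A B ^ 2 - 2 * ⟪B - A, C - A⟫_ℝ + dist C A ^ 2 := by
    rw [dist_eq_norm, ← sub_sub_sub_cancel_right B C A, norm_sub_sq_real, dist_comm A B,
      dist_eq_norm, dist_eq_norm]
  rw [norm_add_sq_real, norm_smul, norm_smul, inner_smul_left, inner_smul_right, mul_pow, mul_pow,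
    ← dist_eq_norm, ← dist_eq_norm, dist_comm B A, Real.norm_eq_abs, Real.norm_eq_abs, sq_abs,
    sq_abs, hcos]
  simp only [conj_trivial]
  ring

noncomputable def incenter (A B C : V) : V :=
  (dist B C + dist C A + dist A B)⁻¹ • (dist B C • A + dist C A • B + dist A B • C)

/-- The midpoint of the arc `BC` not containing `A`, on the ray `AI` with
`AM / AI = (b + c) / (b + c - a)`. -/
noncomputable def arcMidpoint (A B C : V) : V :=
  A + ((dist C A + dist A B) / (dist C A + dist A B - dist B C)) • (incenter A B C - A)

variable {A B C : V}

theorem dist_lt_dist_add_dist_of_affineIndependent (h : AffineIndependent ℝ ![A, B, C]) :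
    dist B C < dist C A + dist A B := by
  rw [dist_comm C A, add_comm, dist_comm A B, dist_lt_dist_add_dist_iff]
  intro hw
  apply affineIndependent_iff_not_collinear_set.mp h
  simpa only [Set.insert_comm A B] using hw.collinear

theorem incenter_sub_left (h : dist B C + dist C A + dist A B ≠ 0) :
    incenter A B C - A = (dist B C + dist C A + dist A B)⁻¹ •
      (dist C A • (B - A) + dist A B • (C - A)) := by
  unfold incenter
  match_scalars
  · field_simp
    ring
  all_goals rfl

theorem arcMidpoint_sub_left (h : dist B C + dist C A + dist A B ≠ 0) :
    arcMidpoint A B C - A = ((dist C A + dist A B) / ((dist C A + dist A B) ^ 2 - dist B C ^ 2)) •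
      (dist C A • (B - A) + dist A B • (C - A)) := by
  rw [arcMidpoint, add_sub_cancel_left, incenter_sub_left h, smul_smul]
  congr 1
  rw [sq_sub_sq, div_eq_mul_inv, div_eq_mul_inv, mul_inv]
  ring

/-- The trillium (incenter–excenter) theorem. -/
theorem dist_arcMidpoint_eq (h : dist C A + dist A B ≠ dist B C) :
    dist (arcMidpoint A B C) C = dist (arcMidpoint A B C) B ∧
      dist (arcMidpoint A B C) (incenter A B C) = dist (arcMidpoint A B C) B := by
  have hσ : dist B C + dist C A + dist A B ≠ 0 := by
    intro h0; apply h; linarith [dist_nonneg (x := B) (y := C), dist_nonneg (x := C) (y := A),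
      dist_nonneg (x := A) (y := B)]
  have hM := arcMidpoint_sub_left hσ
  have hIA := incenter_sub_left hσ
  have hn := norm_smul_sub_add_smul_sub_sq A B C
  generalize dist B C = a, dist C A = b, dist A B = c at *
  have hD : (b + c) ^ 2 - a ^ 2 ≠ 0 := by
    rw [sq_sub_sq]
    exact mul_ne_zero (by contrapose! hσ; linarith) (sub_ne_zero.mpr h)
  set t := (b + c) / ((b + c) ^ 2 - a ^ 2) with ht
  set M := arcMidpoint A B C
  set I := incenter A B C
  have hMB : dist M B ^ 2 = a ^ 2 * b * c / ((b + c) ^ 2 - a ^ 2) := by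
    rw [dist_eq_norm, ← sub_sub_sub_cancel_right M B A, hM,
      show t • (b • (B - A) + c • (C - A)) - (B - A) = (t * b - 1) • (B - A) + (t * c) • (C - A)
        by module, hn, ht]
    field_simp
    ring
  have hMC : dist M C ^ 2 = a ^ 2 * b * c / ((b + c) ^ 2 - a ^ 2) := by
    rw [dist_eq_norm, ← sub_sub_sub_cancel_right M C A, hM,
      show t • (b • (B - A) + c • (C - A)) - (C - A) = (t * b) • (B - A) + (t * c - 1) • (C - A)
        by module, hn, ht]
    field_simp
    ring
  have hMI : dist M I ^ 2 = a ^ 2 * b * c / ((b + c) ^ 2 - a ^ 2) := by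
    rw [dist_eq_norm, ← sub_sub_sub_cancel_right M I A, hM, hIA, ← sub_smul, smul_add, smul_smul,
      smul_smul, hn, ht]
    field_simp
    ring
  constructor <;> refine (pow_left_inj₀ dist_nonneg dist_nonneg two_ne_zero).mp ?_
  · rw [hMC, hMB]
  · rw [hMI, hMB]

theorem dist_circumcenter_arcMidpoint {O : V} (hσ : dist B C + dist C A + dist A B ≠ 0)
    (hB : dist O B = dist O A) (hC : dist O C = dist O A) :
    dist O (arcMidpoint A B C) = dist O A := by
  have chord : ∀ {X : V}, dist O X = dist O A → 2 * ⟪X - A, O - A⟫_ℝ = dist A X ^ 2 := by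
    intro X hX
    have := norm_sub_sq_real (O - A) (X - A)
    rw [sub_sub_sub_cancel_right, ← dist_eq_norm, ← dist_eq_norm, ← dist_eq_norm, hX,
      real_inner_comm, dist_comm X A] at this
    linarith
  have hM := arcMidpoint_sub_left hσ
  have hn := norm_smul_sub_add_smul_sub_sq A B C
  have hu := chord hB
  have hv := chord hC
  rw [dist_comm A C] at hv
  generalize dist B C = a, dist C A = b, dist A B = c at *
  set t := (b + c) / ((b + c) ^ 2 - a ^ 2) with ht
  have htD : t ^ 2 * ((b + c) ^ 2 - a ^ 2) = t * (b + c) := by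
    rcases eq_or_ne ((b + c) ^ 2 - a ^ 2) 0 with hD | hD
    · simp [ht, hD]
    · rw [ht]; field_simp
  refine (pow_left_inj₀ dist_nonneg dist_nonneg two_ne_zero).mp ?_
  rw [dist_eq_norm, ← sub_sub_sub_cancel_right O _ A, norm_sub_sq_real, ← dist_eq_norm,
    hM, smul_add, smul_smul, smul_smul, hn, inner_add_right, inner_smul_right,
    inner_smul_right, real_inner_comm (B - A), real_inner_comm (C - A)]
  linear_combination (b * c) * htD - (t * b) * hu - (t * c) * hv

end InnerProductSpace

section Plane

variable {A B C : EuclideanSpace ℝ (Fin 2)}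

theorem orthocenter3_eq (h : AffineIndependent ℝ ![A, B, C]) :
    orthocenter3 A B C h = A + B + C - (2 : ℝ) • circumcenter3 A B C h := by
  have := Affine.Triangle.orthocenter_vsub_circumcenter_eq_sum_vsub ⟨![A, B, C], h⟩
  rw [Fin.sum_univ_three] at this
  simp only [vsub_eq_sub, Matrix.cons_val_zero, Matrix.cons_val_one, Matrix.cons_val] at this
  rw [sub_eq_iff_eq_add] at this
  rw [orthocenter3, circumcenter3, this]
  module

theorem dist_circumcenter3 (h : AffineIndependent ℝ ![A, B, C]) :
    dist (circumcenter3 A B C h) B = dist (circumcenter3 A B C h) A ∧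
      dist (circumcenter3 A B C h) C = dist (circumcenter3 A B C h) A := by
  have hr := (⟨![A, B, C], h⟩ : Affine.Triangle ℝ _).dist_circumcenter_eq_circumradius
  rw [dist_comm, dist_comm _ A, dist_comm _ C]
  exact ⟨(hr 1).trans (hr 0).symm, (hr 2).trans (hr 0).symm⟩

theorem eq_circumcenter3_of_dist_eq (h : AffineIndependent ℝ ![A, B, C])
    {p : EuclideanSpace ℝ (Fin 2)} (hB : dist p B = dist p A) (hC : dist p C = dist p A) :
    p = circumcenter3 A B C h := by
  refine Affine.Simplex.eq_circumcenter_of_dist_eq _ ?_ (r := dist p A) ?_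
  · rw [h.affineSpan_eq_top_iff_card_eq_finrank_add_one.mpr (by simp)]
    exact AffineSubspace.mem_top _ _ _
  · intro i
    fin_cases i <;> simp [dist_comm _ p, hB, hC]

-- `B + C - N` is equidistant from `H`, `B`, `C` since `H - (B + C - N) = X - N`.
theorem circumcenter3_orthocenter3 {X : EuclideanSpace ℝ (Fin 2)}
    (h : AffineIndependent ℝ ![B, X, C]) (h' : AffineIndependent ℝ ![orthocenter3 B X C h, B, C]) :
    circumcenter3 (orthocenter3 B X C h) B C h' = B + C - circumcenter3 B X C h := by
  obtain ⟨hX, hC⟩ := dist_circumcenter3 h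
  set N := circumcenter3 B X C h
  symm
  apply eq_circumcenter3_of_dist_eq
  all_goals
    rw [orthocenter3_eq, dist_eq_norm _ (_ - _),
      show B + C - N - (B + X + C - (2 : ℝ) • N) = N - X by module, ← dist_eq_norm, hX,
      dist_eq_norm]
  · rw [show B + C - N - B = C - N by abel, ← dist_eq_norm, dist_comm, hC]
  · rw [show B + C - N - C = B - N by abel, ← dist_eq_norm, dist_comm]

end Plane

/-- `AI` is perpendicular to `H O_a`. -/
theorem ai_perp_h_oa (A B C I H HA Oa : EuclideanSpace ℝ (Fin 2))
    (hABC : AffineIndependent ℝ ![A, B, C])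
    (a b c s : ℝ)
    (ha : a = dist B C) (hb : b = dist C A) (hc : c = dist A B)
    (hs : s = (a + b + c) / 2)
    (hI : I = (2 * s)⁻¹ • (a • A + b • B + c • C))
    (hH : H = orthocenter3 A B C hABC)
    (hBIC : AffineIndependent ℝ ![B, I, C])
    (hHA : HA = orthocenter3 B I C hBIC)
    (ha' : AffineIndependent ℝ ![HA, B, C])
    (hOa : Oa = circumcenter3 HA B C ha') :
    ⟪I - A, Oa - H⟫_ℝ = 0 := by
  have hbc := dist_lt_dist_add_dist_of_affineIndependent hABC
  have hσ : dist B C + dist C A + dist A B ≠ 0 := by linarith [dist_nonneg (x := B) (y := C)]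
  have hI' : I = incenter A B C := by rw [hI, hs, ha, hb, hc, incenter]; congr 2; ring
  subst hI' hHA hOa hH
  obtain ⟨hMC, hMI⟩ := dist_arcMidpoint_eq hbc.ne'
  obtain ⟨hOB, hOC⟩ := dist_circumcenter3 hABC
  set O := circumcenter3 A B C hABC
  set M := arcMidpoint A B C
  have hN : circumcenter3 B (incenter A B C) C hBIC = M :=
    (eq_circumcenter3_of_dist_eq hBIC hMI hMC).symm
  have hOaH : circumcenter3 (orthocenter3 B (incenter A B C) C hBIC) B C ha' -
      orthocenter3 A B C hABC = (O - A) + (O - M) := by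
    rw [circumcenter3_orthocenter3, hN, orthocenter3_eq]; module
  have hchord : ⟪M - A, (O - A) + (O - M)⟫_ℝ = 0 := by
    rw [real_inner_comm, ← sub_sub_sub_cancel_left A M O, real_inner_add_sub_eq_zero_iff,
      ← dist_eq_norm, ← dist_eq_norm, dist_circumcenter_arcMidpoint hσ hOB hOC]
  have hk : (dist C A + dist A B) / (dist C A + dist A B - dist B C) ≠ 0 :=
    div_ne_zero (by linarith [dist_nonneg (x := B) (y := C)]) (by linarith)
  have hMA : M - A = ((dist C A + dist A B) / (dist C A + dist A B - dist B C)) •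
      (incenter A B C - A) := add_sub_cancel_left _ _
  rw [hMA, inner_smul_left] at hchord
  rw [hOaH]
  exact (mul_eq_zero.mp hchord).resolve_left hk
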